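/- Let p ≥ 2 be a prime, let L = lcm{1,2,...,p²-1}, and let A = #{x ∈ {1,...,L} : x has exactly one divisor d with 1 < d < p²}. Then lcm{1,2,...,p²} = p·L and #{x ∈ {1,...,p·L} : x has exactly one divisor d with 1 < d ≤ p²} = p·A − φ(L)/(p-1), where φ is Euler's totient function (note φ(L)/(p-1) = φ(L/p)). -/

import Mathlib

/-!
Write `L = lcm(1,…,p²-1)`. Since `p²` is the only prime power up to `p²` missing from
`{1,…,p²-1}`, `L = p·M` with `p ∤ M`, and `lcm(1,…,p²) = p·L`. Having exactly one divisor in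
`(1, p²)` depends only on `x mod L`, so it happens `p·A` times in `[1, pL]`. Allowing the divisor
`p²` removes exactly those `x` with `p² ∣ x` (they already have the divisor `p`). For `x = p²y`,
`p` is the only divisor of `x` in `(1, p²)` iff `y` has no prime factor below `p²` other than `p`,
i.e. iff `gcd(y, M) = 1`, which happens for `φ(M) = φ(L)/(p-1)` values `y ≤ M`.
-/

open Finset Function

namespace Nat

theorem lcmUpto_eq_lcm_lcmUpto_sub_one {n : ℕ} (hn : n ≠ 0) :
    lcmUpto n = lcm n (lcmUpto (n - 1)) := by
  obtain ⟨m, rfl⟩ := exists_eq_add_one_of_ne_zero hn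
  rw [add_tsub_cancel_right, lcmUpto, lcmUpto, ← insert_Icc_right_eq_Icc_add_one (by omega),
    lcm_insert]
  rfl

theorem prime_dvd_lcmUpto_iff {q n : ℕ} (hq : q.Prime) : q ∣ lcmUpto n ↔ q ≤ n := by
  simpa [mem_primeFactors, mem_primesLE, hq, lcmUpto_ne_zero] using
    congrArg (q ∈ ·) (primeFactors_lcmUpto n)

theorem factorization_lcmUpto_pow_sub_one {q : ℕ} (hq : q.Prime) (k : ℕ) :
    (lcmUpto (q ^ k - 1)).factorization q = k - 1 := by
  rw [factorization_lcmUpto _ hq]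
  rcases k with _ | k
  · simp
  have hpos : 0 < q ^ k := pow_pos hq.pos k
  have hlt : q ^ k < q ^ (k + 1) := Nat.pow_lt_pow_right hq.one_lt k.lt_add_one
  rw [add_tsub_cancel_right, log_eq_iff (Or.inr ⟨hq.one_lt, by omega⟩)]
  omega

theorem lcmUpto_pow_sub_one_eq {q : ℕ} (hq : q.Prime) (k : ℕ) :
    lcmUpto (q ^ k - 1) = q ^ (k - 1) * ordCompl[q] (lcmUpto (q ^ k - 1)) :=
  (ordProj_mul_ordCompl_eq_self _ q).symm.trans (by rw [factorization_lcmUpto_pow_sub_one hq])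

theorem lcmUpto_prime_pow {q k : ℕ} (hq : q.Prime) (hk : k ≠ 0) :
    lcmUpto (q ^ k) = q * lcmUpto (q ^ k - 1) := by
  have hcop : Coprime q (ordCompl[q] (lcmUpto (q ^ k - 1))) :=
    coprime_ordCompl hq (lcmUpto_ne_zero _)
  calc lcmUpto (q ^ k)
      = lcm (q ^ (k - 1) * q) (q ^ (k - 1) * ordCompl[q] (lcmUpto (q ^ k - 1))) := by
        rw [← pow_succ, Nat.sub_add_cancel (by omega), ← lcmUpto_pow_sub_one_eq hq,
          lcmUpto_eq_lcm_lcmUpto_sub_one (pow_ne_zero k hq.ne_zero)]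
    _ = q * (q ^ (k - 1) * ordCompl[q] (lcmUpto (q ^ k - 1))) := by
        rw [lcm_mul_left, hcop.lcm_eq_mul]; ring
    _ = q * lcmUpto (q ^ k - 1) := by rw [← lcmUpto_pow_sub_one_eq hq]

theorem card_filter_coprime_Icc_eq_totient (n : ℕ) : #{y ∈ Icc 1 n | n.Coprime y} = φ n := by
  rw [← Ico_add_one_right_eq_Icc, add_comm, filter_coprime_Ico_eq_totient]

theorem card_filter_Icc_mul_of_periodic {P : ℕ → Prop} [DecidablePred P] {a : ℕ}
    (hP : Periodic P a) (k : ℕ) :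
    #{x ∈ Icc 1 (k * a) | P x} = k * #{x ∈ Icc 1 a | P x} := by
  simp only [← Ico_add_one_right_eq_Icc, add_comm _ 1]
  rw [filter_Ico_card_eq_of_periodic _ _ _ (by simpa using hP.nat_mul k),
    filter_Ico_card_eq_of_periodic _ _ _ hP]
  induction k with
  | zero => simp
  | succ k ih => simp only [succ_mul, count_add', show ∀ x, P (x + a) = P x from hP, ih]

theorem card_filter_and_dvd_Icc_mul {m : ℕ} (hm : 0 < m) (N : ℕ) (R : ℕ → Prop)
    [DecidablePred R] :
    #{x ∈ Icc 1 (m * N) | R x ∧ m ∣ x} = #{y ∈ Icc 1 N | R (m * y)} := by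
  refine card_nbij' (· / m) (m * ·) ?_ ?_ ?_ ?_
  · rintro x hx
    simp only [coe_filter, mem_Icc, Set.mem_ofPred_eq] at hx ⊢
    obtain ⟨⟨h1, h2⟩, hR, y, rfl⟩ := hx
    rw [Nat.mul_div_cancel_left y hm]
    refine ⟨⟨?_, ?_⟩, hR⟩ <;> nlinarith
  · rintro y hy
    simp only [coe_filter, mem_Icc, Set.mem_ofPred_eq] at hy ⊢
    refine ⟨⟨?_, ?_⟩, hy.2, dvd_mul_right m y⟩ <;> nlinarith
  · rintro x hx
    simp only [coe_filter, Set.mem_ofPred_eq] at hx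
    exact Nat.mul_div_cancel' hx.2.2
  · rintro y -
    exact Nat.mul_div_cancel_left y hm

theorem periodic_card_filter_dvd_Ioo_eq_one (n : ℕ) :
    Periodic (fun x => #{d ∈ Ioo 1 n | d ∣ x} = 1) (lcmUpto (n - 1)) := by
  intro x
  dsimp only
  congr 2
  refine filter_congr fun d hd => Nat.dvd_add_left (dvd_lcm (mem_Icc.2 ?_))
  rw [mem_Ioo] at hd
  omega

theorem card_filter_dvd_Ioc_eq_one_iff {n x : ℕ} (hn : 2 ≤ n) (hnp : ¬ n.Prime) :
    #{d ∈ Ioc 1 n | d ∣ x} = 1 ↔ #{d ∈ Ioo 1 n | d ∣ x} = 1 ∧ ¬ n ∣ x := by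
  rw [← Ioo_insert_right (by omega : 1 < n), filter_insert]
  by_cases hx : n ∣ x
  · have hmin : minFac n ∈ {d ∈ Ioo 1 n | d ∣ x} :=
      mem_filter.2 ⟨mem_Ioo.2 ⟨(minFac_prime (by omega)).one_lt,
        (not_prime_iff_minFac_lt hn).1 hnp⟩, (minFac_dvd n).trans hx⟩
    have := Finset.card_pos.2 ⟨_, hmin⟩
    rw [if_pos hx, card_insert_of_notMem (by simp)]
    omega
  · simp [hx]

theorem card_filter_dvd_Ioo_sq_eq_one_iff {p x : ℕ} (hp : p.Prime) (hx : p ^ 2 ∣ x) :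
    #{d ∈ Ioo 1 (p ^ 2) | d ∣ x} = 1 ↔ ∀ q, q.Prime → q < p ^ 2 → q ∣ x → q = p := by
  have hp_lt : p < p ^ 2 := lt_self_pow₀ hp.one_lt one_lt_two
  have hp_mem : p ∈ {d ∈ Ioo 1 (p ^ 2) | d ∣ x} :=
    mem_filter.2 ⟨mem_Ioo.2 ⟨hp.one_lt, hp_lt⟩, (dvd_pow_self p two_ne_zero).trans hx⟩
  constructor
  · intro h q hq hlt hqx
    obtain ⟨a, ha⟩ := card_eq_one.1 h
    have hq_mem : q ∈ {d ∈ Ioo 1 (p ^ 2) | d ∣ x} :=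
      mem_filter.2 ⟨mem_Ioo.2 ⟨hq.one_lt, hlt⟩, hqx⟩
    rw [ha, mem_singleton] at hp_mem hq_mem
    rw [hp_mem, hq_mem]
  · intro h
    refine card_eq_one.2 ⟨p, eq_singleton_iff_unique_mem.2 ⟨hp_mem, fun d hd => ?_⟩⟩
    rw [mem_filter, mem_Ioo] at hd
    obtain ⟨⟨h1, h2⟩, hdx⟩ := hd
    have hd_pow := eq_prime_pow_of_unique_prime_dvd (by omega) fun hq hqd =>
      h _ hq ((le_of_dvd (by omega) hqd).trans_lt h2) (hqd.trans hdx)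
    rw [hd_pow] at h1 h2 ⊢
    rw [Nat.pow_lt_pow_iff_right hp.one_lt] at h2
    interval_cases d.primeFactorsList.length <;> simp_all

theorem prime_dvd_ordCompl_lcmUpto_iff {p q n : ℕ} (hp : p.Prime) (hq : q.Prime) :
    q ∣ ordCompl[p] (lcmUpto n) ↔ q ≤ n ∧ q ≠ p := by
  constructor
  · intro h
    refine ⟨(prime_dvd_lcmUpto_iff hq).1 (h.trans (ordCompl_dvd _ _)), ?_⟩
    rintro rfl
    exact not_dvd_ordCompl hp (lcmUpto_ne_zero n) h
  · rintro ⟨hle, hne⟩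
    exact dvd_ordCompl_of_dvd_not_dvd ((prime_dvd_lcmUpto_iff hq).2 hle)
      (by rwa [prime_dvd_prime_iff_eq hp hq, eq_comm])

theorem card_filter_dvd_Ioo_sq_mul_eq_one_iff {p : ℕ} (hp : p.Prime) (y : ℕ) :
    #{d ∈ Ioo 1 (p ^ 2) | d ∣ p ^ 2 * y} = 1 ↔
      Coprime (ordCompl[p] (lcmUpto (p ^ 2 - 1))) y := by
  rw [card_filter_dvd_Ioo_sq_eq_one_iff hp (dvd_mul_right _ _)]
  constructor
  · intro h
    refine coprime_of_dvd fun q hq hqM hqy => ?_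
    obtain ⟨hle, hne⟩ := (prime_dvd_ordCompl_lcmUpto_iff hp hq).1 hqM
    exact hne (h q hq (by have := hq.two_le; omega) (dvd_mul_of_dvd_right hqy _))
  · intro h q hq hlt hqx
    by_contra hne
    have hqy : q ∣ y := (Coprime.dvd_mul_left (((coprime_primes hq hp).2 hne).pow_right 2)).1 hqx
    have hqM := (prime_dvd_ordCompl_lcmUpto_iff hp hq).2 ⟨le_sub_one_of_lt hlt, hne⟩
    exact hq.one_lt.ne' (Coprime.eq_one_of_dvd (h.coprime_dvd_left hqM) hqy)

end Nat

open Nat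

/-- Let `p` be prime, `L = lcm{1,...,p²-1}`, and `A` the number of
`x ∈ {1,...,L}` with exactly one divisor `d`, `1 < d < p²`. Then
`lcm{1,...,p²} = p·L`, and the number of `x ∈ {1,...,p·L}` with exactly one
divisor `d`, `1 < d ≤ p²`, equals `p·A − φ(L)/(p-1)`. -/
theorem count_extend_by_prime_square (p : ℕ) (hp : p.Prime) (L A : ℕ)
    (hL : L = (Finset.Icc 1 (p ^ 2 - 1)).lcm id)
    (hA : A = ((Finset.Icc 1 L).filter
      (fun x => ((Finset.Ioo 1 (p ^ 2)).filter (fun d => d ∣ x)).card = 1)).card) :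
    (Finset.Icc 1 (p ^ 2)).lcm id = p * L ∧
    ((Finset.Icc 1 (p * L)).filter
        (fun x => ((Finset.Ioc 1 (p ^ 2)).filter (fun d => d ∣ x)).card = 1)).card =
      p * A - Nat.totient L / (p - 1) := by
  replace hL : L = lcmUpto (p ^ 2 - 1) := hL
  set M := ordCompl[p] (lcmUpto (p ^ 2 - 1))
  have hLM : L = p * M := by rw [hL, lcmUpto_pow_sub_one_eq hp 2, show 2 - 1 = 1 from rfl, pow_one]
  have hcop : Coprime p M := coprime_ordCompl hp (lcmUpto_ne_zero _)
  refine ⟨by rw [hL]; exact lcmUpto_prime_pow hp two_ne_zero, ?_⟩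
  set P := fun x => #{d ∈ Ioo 1 (p ^ 2) | d ∣ x} = 1
  have hcount : #{x ∈ Icc 1 (p * L) | P x} = p * A := by
    rw [hA, hL]
    exact card_filter_Icc_mul_of_periodic (periodic_card_filter_dvd_Ioo_eq_one _) p
  have hsq : #{x ∈ Icc 1 (p * L) | P x ∧ p ^ 2 ∣ x} = φ M := by
    rw [hLM, ← mul_assoc, ← sq, card_filter_and_dvd_Icc_mul (pow_pos hp.pos 2)]
    simp only [P, card_filter_dvd_Ioo_sq_mul_eq_one_iff hp, M]
    exact card_filter_coprime_Icc_eq_totient _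
  have htot : φ L / (p - 1) = φ M := by
    rw [hLM, totient_mul hcop, totient_prime hp,
      Nat.mul_div_cancel_left _ (by have := hp.two_le; omega)]
  have hsplit := card_filter_add_card_filter_not (s := {x ∈ Icc 1 (p * L) | P x}) (p ^ 2 ∣ ·)
  rw [filter_filter, filter_filter] at hsplit
  have hQ (x : ℕ) : #{d ∈ Ioc 1 (p ^ 2) | d ∣ x} = 1 ↔ P x ∧ ¬ p ^ 2 ∣ x :=
    card_filter_dvd_Ioc_eq_one_iff (hp.two_le.trans (Nat.le_self_pow two_ne_zero p))
      (Nat.Prime.not_prime_pow le_rfl)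
  rw [filter_congr fun x _ => hQ x, htot, ← hcount, ← hsq]
  omega
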